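/- Let X be a nonzero real Banach space which is a Lindenstrauss space and whose closed unit ball B_X has at least one extreme point. Then t(X) = 2. -/

import Mathlib

/-- The thinness index `t(X)` of a normed space. -/
noncomputable def thinness (X : Type*) [NormedAddCommGroup X] : ℝ :=
  sInf {r : ℝ | 0 < r ∧ ∀ (n : ℕ) (x : Fin n → X), (∀ i, ‖x i‖ = 1) →
    ∀ ε : ℝ, 0 < ε → ∃ y : X, ‖y‖ = 1 ∧ ∀ i, ‖x i - y‖ < r + ε}

/-- A Banach space is a Lindenstrauss space if its dual is isometrically isomorphic to
`L¹(μ)` for some measure `μ`. -/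
def IsLindenstrauss (X : Type*) [NormedAddCommGroup X] [NormedSpace ℝ X] : Prop :=
  ∃ (α : Type) (_ : MeasurableSpace α) (μ : MeasureTheory.Measure α),
    Nonempty (StrongDual ℝ X ≃ₗᵢ[ℝ] MeasureTheory.Lp ℝ 1 μ)

/-!
In a Lindenstrauss space, finitely many pairwise intersecting closed balls `B(x i, r i)` have a
common point. Up to an `ε`, Hahn–Banach reduces this to `∑ ψ i (x i) ≤ ∑ ‖ψ i‖ * r i` for
functionals with `∑ ψ i = 0`, which holds in `L¹` because such a family splits as an
antisymmetric flow `ψ i = ∑ j, φ i j` with `∑ j, ‖φ i j‖ ≤ ‖ψ i‖`; completeness removes the `ε`.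
If `e` is an extreme point of the unit ball and `y` is any vector, a common point `z` of
`B(e, 1)`, `B(-e, 1)` and `B(y / 2, (max ‖e - y‖ ‖e + y‖ - ‖e‖) / 2)` must vanish, since `e ± z`
lie in the unit ball; hence `‖e‖ + ‖y‖ ≤ max ‖e - y‖ ‖e + y‖`. So no unit vector lies at
distance `< 2` from both `e` and `-e`, which forces `t(X) = 2`.
-/

open MeasureTheory Filter Topology

section TransportPlan

variable {ι : Type*} [Fintype ι]

/-- When `∑ i, a i = 0`, the positive and negative parts of `a` have the same total mass and this
is the product transport plan from the first to the second. -/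
noncomputable def transportPlan (a : ι → ℝ) (i j : ι) : ℝ :=
  (a i)⁺ * (a j)⁻ / ∑ k, (a k)⁺

lemma sum_posPart_nonneg (a : ι → ℝ) : 0 ≤ ∑ k, (a k)⁺ :=
  Finset.sum_nonneg fun k _ => posPart_nonneg (a k)

lemma transportPlan_nonneg (a : ι → ℝ) (i j : ι) : 0 ≤ transportPlan a i j :=
  div_nonneg (mul_nonneg (posPart_nonneg _) (negPart_nonneg _)) (sum_posPart_nonneg a)

lemma transportPlan_le_abs (a : ι → ℝ) (i j : ι) : transportPlan a i j ≤ |a j| := by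
  refine div_le_of_le_mul₀ (sum_posPart_nonneg a) (abs_nonneg _) ?_
  rw [← posPart_add_negPart, mul_comm]
  gcongr
  · exact le_add_of_nonneg_left (posPart_nonneg (a j))
  · exact Finset.single_le_sum (fun k _ => posPart_nonneg (a k)) (Finset.mem_univ i)

lemma sum_posPart_eq_sum_negPart {a : ι → ℝ} (ha : ∑ k, a k = 0) :
    ∑ k, (a k)⁺ = ∑ k, (a k)⁻ := by
  rw [← sub_eq_zero, ← Finset.sum_sub_distrib]
  simpa only [posPart_sub_negPart] using ha

lemma sum_transportPlan_right {a : ι → ℝ} (ha : ∑ k, a k = 0) (i : ι) :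
    ∑ j, transportPlan a i j = (a i)⁺ := by
  simp only [transportPlan]
  rw [← Finset.sum_div, ← Finset.mul_sum, ← sum_posPart_eq_sum_negPart ha]
  rcases eq_or_ne (∑ k, (a k)⁺) 0 with h | h
  · have := (Finset.sum_eq_zero_iff_of_nonneg fun k _ => posPart_nonneg (a k)).1 h i
      (Finset.mem_univ i)
    simp [this]
  · exact mul_div_cancel_right₀ _ h

lemma sum_transportPlan_left {a : ι → ℝ} (ha : ∑ k, a k = 0) (j : ι) :
    ∑ i, transportPlan a i j = (a j)⁻ := by
  simp only [transportPlan]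
  rw [← Finset.sum_div, ← Finset.sum_mul]
  rcases eq_or_ne (∑ k, (a k)⁺) 0 with h | h
  · rw [sum_posPart_eq_sum_negPart ha] at h
    have := (Finset.sum_eq_zero_iff_of_nonneg fun k _ => negPart_nonneg (a k)).1 h j
      (Finset.mem_univ j)
    simp [this]
  · exact mul_div_cancel_left₀ _ h

end TransportPlan

namespace MeasureTheory

variable {α ι : Type*} [MeasurableSpace α] {μ : Measure α} [Fintype ι]

lemma L1.integrable_transportPlan (f : ι → Lp ℝ 1 μ) (i j : ι) :
    Integrable (fun ω => transportPlan (fun k => f k ω) i j) μ := by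
  have hf : ∀ k, AEMeasurable (f k) μ := fun k => (Lp.aestronglyMeasurable (f k)).aemeasurable
  refine (L1.integrable_coeFn (f j)).norm.mono' ?_ (Eventually.of_forall fun ω => ?_)
  · refine AEMeasurable.aestronglyMeasurable ?_
    simp only [transportPlan]
    fun_prop
  · rw [Real.norm_eq_abs, abs_of_nonneg (transportPlan_nonneg _ _ _)]
    exact transportPlan_le_abs _ _ _

theorem L1.exists_antisymm_decomposition (f : ι → Lp ℝ 1 μ) (hf : ∑ i, f i = 0) :
    ∃ g : ι → ι → Lp ℝ 1 μ, (∀ i j, g j i = -g i j) ∧ (∀ i, ∑ j, g i j = f i) ∧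
      ∀ i, ∑ j, ‖g i j‖ ≤ ‖f i‖ := by
  set c : ι → ι → α → ℝ := fun i j ω => transportPlan (fun k => f k ω) i j
  have hsum : ∀ᵐ ω ∂μ, ∑ k, f k ω = 0 := by
    filter_upwards [Lp.coeFn_finsetSum Finset.univ f, Lp.coeFn_zero ℝ 1 μ] with ω h1 h0
    rw [← Finset.sum_apply, ← h1, hf, h0, Pi.zero_apply]
  have hc_int : ∀ i j, Integrable (c i j) μ := L1.integrable_transportPlan f
  set C : ι → ι → Lp ℝ 1 μ := fun i j => (hc_int i j).toL1 (c i j)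
  have hC_norm : ∀ i j, ‖C i j‖ = ∫ ω, c i j ω ∂μ := by
    intro i j
    rw [L1.norm_eq_integral_norm]
    refine integral_congr_ae ?_
    filter_upwards [(hc_int i j).coeFn_toL1] with ω h
    rw [h, Real.norm_eq_abs, abs_of_nonneg (transportPlan_nonneg _ _ _)]
  refine ⟨fun i j => C i j - C j i, fun i j => (neg_sub _ _).symm, fun i => ?_, fun i => ?_⟩
  · apply Lp.ext
    filter_upwards [Lp.coeFn_finsetSum Finset.univ (fun j => C i j - C j i), hsum,
      ae_all_iff.2 fun j => Lp.coeFn_sub (C i j) (C j i),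
      (ae_all_iff.2 fun j => ae_all_iff.2 fun k => (hc_int j k).coeFn_toL1 :
        ∀ᵐ ω ∂μ, ∀ j k, C j k ω = c j k ω)] with ω h1 h2 h3 h4
    rw [h1, Finset.sum_apply]
    simp only [h3, Pi.sub_apply, h4, Finset.sum_sub_distrib, c,
      sum_transportPlan_right h2, sum_transportPlan_left h2, posPart_sub_negPart]
  · calc ∑ j, ‖C i j - C j i‖ ≤ ∑ j, (‖C i j‖ + ‖C j i‖) :=
          Finset.sum_le_sum fun j _ => norm_sub_le _ _
      _ = ∑ j, ∫ ω, (c i j ω + c j i ω) ∂μ := by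
          simp only [hC_norm, MeasureTheory.integral_add (hc_int _ _) (hc_int _ _)]
      _ = ∫ ω, ∑ j, (c i j ω + c j i ω) ∂μ :=
          (integral_finsetSum _ fun j _ => (hc_int i j).add (hc_int j i)).symm
      _ = ∫ ω, ‖f i ω‖ ∂μ := by
          refine integral_congr_ae ?_
          filter_upwards [hsum] with ω h
          simp only [c, Finset.sum_add_distrib, sum_transportPlan_right h,
            sum_transportPlan_left h, posPart_add_negPart, Real.norm_eq_abs]
      _ = ‖f i‖ := (L1.norm_eq_integral_norm _).symm

end MeasureTheory

section BallIntersection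

variable {X : Type*} [NormedAddCommGroup X] [NormedSpace ℝ X] {ι : Type*} [Fintype ι]

lemma sum_apply_le_sum_norm_mul_of_antisymm_decomposition {ψ : ι → StrongDual ℝ X}
    (φ : ι → ι → StrongDual ℝ X) (hφ_antisymm : ∀ i j, φ j i = -φ i j)
    (hφ_sum : ∀ i, ∑ j, φ i j = ψ i) (hφ_norm : ∀ i, ∑ j, ‖φ i j‖ ≤ ‖ψ i‖)
    {x : ι → X} {r : ι → ℝ} (hx : ∀ i j, ‖x i - x j‖ ≤ r i + r j) :
    ∑ i, ψ i (x i) ≤ ∑ i, ‖ψ i‖ * r i := by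
  have hr : ∀ i, 0 ≤ r i := fun i => by linarith [hx i i, norm_nonneg (x i - x i)]
  have hψ_apply : ∀ i v, ψ i v = ∑ j, φ i j v := fun i v => by
    rw [← hφ_sum, sum_apply]
  have h_double : ∑ i, ∑ j, φ i j (x i - x j) = 2 * ∑ i, ψ i (x i) := by
    have h_swap : ∑ i, ∑ j, φ i j (x j) = -∑ i, ψ i (x i) := calc
      ∑ i, ∑ j, φ i j (x j) = ∑ j, ∑ i, -φ j i (x j) := by
        rw [Finset.sum_comm]
        exact Finset.sum_congr rfl fun j _ => Finset.sum_congr rfl fun i _ => by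
          rw [hφ_antisymm j i, neg_apply]
      _ = -∑ i, ψ i (x i) := by simp only [Finset.sum_neg_distrib, ← hψ_apply]
    simp only [map_sub, Finset.sum_sub_distrib, h_swap, ← hψ_apply]
    ring
  have h_norm_symm : ∑ i, ∑ j, ‖φ i j‖ * r j = ∑ i, ∑ j, ‖φ i j‖ * r i := by
    rw [Finset.sum_comm]
    refine Finset.sum_congr rfl fun i _ => Finset.sum_congr rfl fun j _ => ?_
    rw [hφ_antisymm i j, norm_neg]
  have : 2 * ∑ i, ψ i (x i) ≤ 2 * ∑ i, ‖ψ i‖ * r i := calc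
    2 * ∑ i, ψ i (x i) = ∑ i, ∑ j, φ i j (x i - x j) := h_double.symm
    _ ≤ ∑ i, ∑ j, ‖φ i j‖ * (r i + r j) := by
        gcongr with i _ j _
        exact (le_abs_self _).trans (((φ i j).le_opNorm _).trans
          (mul_le_mul_of_nonneg_left (hx i j) (norm_nonneg _)))
    _ = 2 * ∑ i, (∑ j, ‖φ i j‖) * r i := by
        simp only [mul_add, Finset.sum_add_distrib, h_norm_symm, Finset.sum_mul]
        ring
    _ ≤ 2 * ∑ i, ‖ψ i‖ * r i := by
        gcongr with i
        · exact hr i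
        · exact hφ_norm i
  linarith

theorem IsLindenstrauss.sum_apply_le_sum_norm_mul (hL : IsLindenstrauss X)
    {ψ : ι → StrongDual ℝ X} (hψ : ∑ i, ψ i = 0) {x : ι → X} {r : ι → ℝ}
    (hx : ∀ i j, ‖x i - x j‖ ≤ r i + r j) :
    ∑ i, ψ i (x i) ≤ ∑ i, ‖ψ i‖ * r i := by
  obtain ⟨α, _, μ, ⟨T⟩⟩ := hL
  obtain ⟨g, hg_antisymm, hg_sum, hg_norm⟩ :=
    L1.exists_antisymm_decomposition (fun i => T (ψ i)) (by rw [← map_sum, hψ, map_zero])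
  refine sum_apply_le_sum_norm_mul_of_antisymm_decomposition (fun i j => T.symm (g i j))
    (fun i j => by rw [hg_antisymm, map_neg]) (fun i => by rw [← map_sum, hg_sum,
      T.symm_apply_apply]) (fun i => ?_) hx
  simpa only [LinearIsometryEquiv.norm_map] using hg_norm i

lemma StrongDual.exists_norm_lt_and_le_apply (f : StrongDual ℝ X) {s t : ℝ} (hs : 0 < s)
    (ht : t < 1) : ∃ v : X, ‖v‖ < s ∧ t * (‖f‖ * s) ≤ f v := by
  rcases (norm_nonneg f).eq_or_lt with hf | hf
  · exact ⟨0, by simpa using hs, by simp [← hf]⟩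
  obtain ⟨x, hx, hfx⟩ := f.exists_lt_apply_of_lt_opNorm (mul_lt_of_lt_one_left hf ht)
  obtain ⟨y, hy, hfy⟩ : ∃ y : X, ‖y‖ < 1 ∧ t * ‖f‖ < f y := by
    rcases abs_cases (f x) with ⟨h, -⟩ | ⟨h, -⟩
    · exact ⟨x, hx, by rwa [Real.norm_eq_abs, h] at hfx⟩
    · exact ⟨-x, by rwa [norm_neg], by rwa [map_neg, ← h, ← Real.norm_eq_abs]⟩
  refine ⟨s • y, ?_, ?_⟩
  · rw [norm_smul, Real.norm_of_nonneg hs.le]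
    exact mul_lt_of_lt_one_right hs hy
  · rw [map_smul, smul_eq_mul]
    nlinarith

lemma sum_norm_mul_le_of_forall_sum_apply_lt {ψ : ι → StrongDual ℝ X} {s : ι → ℝ}
    (hs : ∀ i, 0 < s i) {u : ℝ} (h : ∀ w : ι → X, (∀ i, ‖w i‖ < s i) → ∑ i, ψ i (w i) < u) :
    ∑ i, ‖ψ i‖ * s i ≤ u := by
  by_contra! hlt
  set S := ∑ i, ‖ψ i‖ * s i
  have hS : Tendsto (fun t : ℝ => t * S) (𝓝[<] 1) (𝓝 S) := by
    simpa using ((tendsto_id (x := 𝓝 (1 : ℝ))).mul_const S).mono_left nhdsWithin_le_nhds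
  obtain ⟨t, hut, ht⟩ :=
    ((hS.eventually (lt_mem_nhds hlt)).and self_mem_nhdsWithin).exists
  choose w hw_norm hw_apply using fun i => (ψ i).exists_norm_lt_and_le_apply (hs i) ht
  have : t * S ≤ ∑ i, ψ i (w i) := by
    rw [Finset.mul_sum]
    exact Finset.sum_le_sum fun i _ => hw_apply i
  linarith [h w hw_norm]

lemma StrongDual.eq_zero_of_forall_le_apply {f : StrongDual ℝ X} {c : ℝ} (h : ∀ z, c ≤ f z) :
    f = 0 := by
  by_contra! hf
  obtain ⟨z, hz⟩ := DFunLike.ne_iff.1 hf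
  have := h (((c - 1) / f z) • z)
  rw [map_smul, smul_eq_mul, div_mul_cancel₀ _ hz] at this
  linarith

lemma exists_sum_eq_zero_and_sum_norm_mul_le_sum_apply {x : ι → X} {s : ι → ℝ}
    (hs : ∀ i, 0 < s i) (h : ∀ z : X, ∃ i, s i ≤ ‖z - x i‖) :
    ∃ ψ : ι → StrongDual ℝ X, ∑ i, ψ i = 0 ∧ 0 < ∑ i, ψ i (x i) ∧
      ∑ i, ‖ψ i‖ * s i ≤ ∑ i, ψ i (x i) := by
  classical
  set O : Set (ι → X) := Set.univ.pi fun i => Metric.ball 0 (s i)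
  set A : Set (ι → X) := Set.range fun z i => z - x i
  have hA : Convex ℝ A := by
    rintro _ ⟨z, rfl⟩ _ ⟨z', rfl⟩ a b - - hab
    refine ⟨a • z + b • z', funext fun i => ?_⟩
    simp only [Pi.add_apply, Pi.smul_apply]
    linear_combination (norm := module) hab • x i
  have hOA : Disjoint O A := by
    rw [Set.disjoint_right]
    rintro _ ⟨z, rfl⟩ hz
    obtain ⟨i, hi⟩ := h z
    exact hi.not_gt (by simpa using hz i (Set.mem_univ i))
  obtain ⟨Φ, u, hΦO, hΦA⟩ := geometric_hahn_banach_open (convex_pi fun i _ => convex_ball _ _)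
    (isOpen_set_pi Set.finite_univ fun i _ => Metric.isOpen_ball) hA hOA
  set Ψ : ι → StrongDual ℝ X := fun i => Φ.comp (ContinuousLinearMap.single ℝ (fun _ => X) i)
  have hΦ : ∀ w, Φ w = ∑ i, Ψ i (w i) := fun w => by
    conv_lhs => rw [← Finset.univ_sum_single w]
    simp [Ψ, map_sum]
  have hu : 0 < u := by simpa using hΦO 0 (by simpa using hs)
  have hu_le : u ≤ ∑ i, -Ψ i (x i) := by
    simpa only [hΦ, zero_sub, map_neg] using hΦA _ ⟨0, rfl⟩
  refine ⟨fun i => -Ψ i, ?_, hu.trans_le hu_le, ?_⟩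
  · rw [Finset.sum_neg_distrib, neg_eq_zero]
    refine StrongDual.eq_zero_of_forall_le_apply (c := u + ∑ i, Ψ i (x i)) fun z => ?_
    have := hΦA _ ⟨z, rfl⟩
    simp only [hΦ, map_sub, Finset.sum_sub_distrib, sum_apply] at this ⊢
    linarith
  · have h_upper : ∑ i, ‖Ψ i‖ * s i ≤ u :=
      sum_norm_mul_le_of_forall_sum_apply_lt hs fun w hw => by
        rw [← hΦ]
        exact hΦO w (by simpa using hw)
    simpa only [norm_neg, neg_apply] using h_upper.trans hu_le

theorem IsLindenstrauss.exists_forall_norm_sub_lt (hL : IsLindenstrauss X) {x : ι → X}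
    {r : ι → ℝ} (hx : ∀ i j, ‖x i - x j‖ ≤ r i + r j) {ε : ℝ} (hε : 0 < ε) :
    ∃ z : X, ∀ i, ‖z - x i‖ < r i + ε := by
  by_contra! hcon
  have hr : ∀ i, 0 < r i + ε := fun i => by linarith [hx i i, norm_nonneg (x i - x i)]
  obtain ⟨ψ, hψ_sum, hψ_pos, hψ_le⟩ := exists_sum_eq_zero_and_sum_norm_mul_le_sum_apply hr hcon
  have h_flow := hL.sum_apply_le_sum_norm_mul hψ_sum hx
  have h_split : ∑ i, ‖ψ i‖ * (r i + ε) = ∑ i, ‖ψ i‖ * r i + (∑ i, ‖ψ i‖) * ε := by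
    simp only [mul_add, Finset.sum_add_distrib, Finset.sum_mul]
  have h_norm_sum : ∑ i, ‖ψ i‖ = 0 :=
    le_antisymm (nonpos_of_mul_nonpos_left (by linarith) hε)
      (Finset.sum_nonneg fun i _ => norm_nonneg _)
  have h_norm := (Finset.sum_eq_zero_iff_of_nonneg fun i _ => norm_nonneg (ψ i)).1 h_norm_sum
  simp only [h_norm, Finset.mem_univ, zero_mul, Finset.sum_const_zero] at h_flow
  linarith

end BallIntersection

lemma eq_zero_of_add_mem_of_sub_mem_of_mem_extremePoints {E : Type*} [AddCommGroup E]
    [Module ℝ E] {A : Set E} {e z : E} (he : e ∈ A.extremePoints ℝ) (h_add : e + z ∈ A)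
    (h_sub : e - z ∈ A) : z = 0 := by
  have := he.2 h_sub h_add ⟨1 / 2, 1 / 2, by norm_num, by norm_num, by norm_num, by module⟩
  simpa using this

lemma norm_neg_sub {E : Type*} [SeminormedAddCommGroup E] (a b : E) :
    ‖-a - b‖ = ‖a + b‖ := by
  rw [← neg_add', norm_neg]

section CompleteSpace

variable {X : Type*} [NormedAddCommGroup X] [CompleteSpace X]

theorem exists_forall_norm_sub_le_of_forall_exists_lt
    (h : ∀ (n : ℕ) (x : Fin n → X) (r : Fin n → ℝ), (∀ i j, ‖x i - x j‖ ≤ r i + r j) →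
      ∀ ε > 0, ∃ z : X, ∀ i, ‖z - x i‖ < r i + ε)
    {n : ℕ} {x : Fin n → X} {r : Fin n → ℝ} (hx : ∀ i j, ‖x i - x j‖ ≤ r i + r j) :
    ∃ z : X, ∀ i, ‖z - x i‖ ≤ r i := by
  -- Adding the current point as a ball of radius `1 / 2 ^ k` keeps the next one within
  -- `2 / 2 ^ k` of it, so the points form a Cauchy sequence.
  set Z : ℕ → Set X := fun k => {z | ∀ i, ‖z - x i‖ ≤ r i + 1 / 2 ^ k}
  have h_step : ∀ k, ∀ z ∈ Z k, ∃ z' ∈ Z (k + 1), dist z z' ≤ 4 / 2 / 2 ^ k := by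
    intro k z hz
    obtain ⟨z', hz'⟩ := h (n + 1) (Fin.cons z x) (Fin.cons (1 / 2 ^ k) r) (by
      intro i j
      refine Fin.cases ?_ (fun i => ?_) i <;> refine Fin.cases ?_ (fun j => ?_) j <;>
        simp only [Fin.cons_zero, Fin.cons_succ]
      · simp only [sub_self, norm_zero]; positivity
      · linarith [hz j]
      · rw [norm_sub_rev]; linarith [hz i]
      · exact hx i j) (1 / 2 ^ (k + 1)) (by positivity)
    refine ⟨z', fun i => by simpa using (hz' i.succ).le, ?_⟩
    rw [dist_comm, dist_eq_norm]
    have hk : (1 : ℝ) / 2 ^ (k + 1) ≤ 1 / 2 ^ k := by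
      gcongr
      · norm_num
      · omega
    have h0 := hz' 0
    simp only [Fin.cons_zero] at h0
    linarith [show (4 : ℝ) / 2 / 2 ^ k = 2 * (1 / 2 ^ k) by ring]
  obtain ⟨z₀, hz₀⟩ := h n x r hx 1 one_pos
  choose! F hFZ hF_dist using h_step
  set z : ℕ → X := fun k => Nat.rec z₀ (fun k zk => F k zk) k
  have hz : ∀ k, z k ∈ Z k := by
    intro k
    induction k with
    | zero => exact fun i => by simpa [z] using (hz₀ i).le
    | succ k ih => exact hFZ k (z k) ih
  obtain ⟨L, hL⟩ := cauchySeq_tendsto_of_complete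
    (cauchySeq_of_le_geometric_two fun k => hF_dist k (z k) (hz k))
  refine ⟨L, fun i => le_of_tendsto_of_tendsto' (hL.sub_const (x i)).norm ?_ fun k => hz k i⟩
  simpa using (tendsto_const_nhds (x := r i)).add
    ((tendsto_const_nhds (x := (1 : ℝ))).div_atTop (tendsto_pow_atTop_atTop_of_one_lt one_lt_two))

variable [NormedSpace ℝ X]

theorem IsLindenstrauss.exists_forall_norm_sub_le (hL : IsLindenstrauss X) {n : ℕ}
    {x : Fin n → X} {r : Fin n → ℝ} (hx : ∀ i j, ‖x i - x j‖ ≤ r i + r j) :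
    ∃ z : X, ∀ i, ‖z - x i‖ ≤ r i :=
  exists_forall_norm_sub_le_of_forall_exists_lt
    (fun _ _ _ hx _ hε => hL.exists_forall_norm_sub_lt hx hε) hx

theorem IsLindenstrauss.norm_add_norm_le_max_of_mem_extremePoints (hL : IsLindenstrauss X)
    {e : X} (he : e ∈ (Metric.closedBall (0 : X) 1).extremePoints ℝ) (y : X) :
    ‖e‖ + ‖y‖ ≤ max ‖e - y‖ ‖e + y‖ := by
  set M := max ‖e - y‖ ‖e + y‖
  have he1 : ‖e‖ ≤ 1 := by simpa using he.1
  have hee : ‖e + e‖ ≤ 1 + 1 := (norm_add_le e e).trans (by linarith)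
  have hM : ‖e‖ ≤ M := by
    have := norm_add_le (e - y) (e + y)
    rw [show e - y + (e + y) = (2 : ℝ) • e by module, norm_smul, Real.norm_two] at this
    linarith [le_max_left ‖e - y‖ ‖e + y‖, le_max_right ‖e - y‖ ‖e + y‖]
  have h_half : ∀ w : X, ‖w‖ ≤ M → ‖(2⁻¹ : ℝ) • w + (2⁻¹ : ℝ) • e‖ ≤ 1 + (M - ‖e‖) / 2 := by
    intro w hw
    refine (norm_add_le _ _).trans ?_
    rw [norm_smul, norm_smul, Real.norm_of_nonneg (by norm_num : (0 : ℝ) ≤ 2⁻¹)]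
    linarith
  have h₁ : ‖e - (2⁻¹ : ℝ) • y‖ ≤ 1 + (M - ‖e‖) / 2 := by
    simpa only [show (2⁻¹ : ℝ) • (e - y) + (2⁻¹ : ℝ) • e = e - (2⁻¹ : ℝ) • y by module]
      using h_half (e - y) (le_max_left _ _)
  have h₂ : ‖e + (2⁻¹ : ℝ) • y‖ ≤ 1 + (M - ‖e‖) / 2 := by
    simpa only [show (2⁻¹ : ℝ) • (e + y) + (2⁻¹ : ℝ) • e = e + (2⁻¹ : ℝ) • y by module]
      using h_half (e + y) (le_max_right _ _)
  obtain ⟨z, hz⟩ := hL.exists_forall_norm_sub_le (x := ![e, -e, (2⁻¹ : ℝ) • y])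
    (r := ![1, 1, (M - ‖e‖) / 2]) (by
      intro i j
      fin_cases i <;> fin_cases j <;>
        simp only [Fin.zero_eta, Fin.isValue, Fin.mk_one, Fin.reduceFinMk, Matrix.cons_val_zero,
          Matrix.cons_val_one, Matrix.cons_val, sub_self, norm_zero, sub_neg_eq_add, norm_neg_sub,
          norm_sub_rev ((2⁻¹ : ℝ) • y), add_comm ((2⁻¹ : ℝ) • y)] <;>
        linarith)
  have hz0 : z = 0 := eq_zero_of_add_mem_of_sub_mem_of_mem_extremePoints he
    (by simpa [add_comm] using hz 1) (by simpa [norm_sub_rev] using hz 0)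
  have := hz 2
  simp only [hz0, Fin.isValue, Matrix.cons_val, zero_sub, norm_neg, norm_smul, norm_inv,
    Real.norm_ofNat] at this
  linarith

end CompleteSpace

theorem thinness_eq_two_of_forall_two_le_max {X : Type*} [NormedAddCommGroup X] {e : X}
    (he : ‖e‖ = 1) (h : ∀ y : X, ‖y‖ = 1 → 2 ≤ max ‖e - y‖ ‖e + y‖) : thinness X = 2 := by
  refine IsLeast.csInf_eq ⟨⟨two_pos, fun n x hx ε hε => ⟨e, he, fun i => ?_⟩⟩, ?_⟩
  · calc ‖x i - e‖ ≤ ‖x i‖ + ‖e‖ := norm_sub_le _ _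
      _ < 2 + ε := by rw [hx i, he]; linarith
  · rintro r ⟨-, hr⟩
    by_contra! hr2
    obtain ⟨y, hy, hxy⟩ := hr 2 ![e, -e] (fun i => by fin_cases i <;> simp [he])
      ((2 - r) / 2) (by linarith)
    have h_sub : ‖e - y‖ < r + (2 - r) / 2 := hxy 0
    have h_add : ‖e + y‖ < r + (2 - r) / 2 := by
      simpa [norm_neg_sub] using hxy 1
    linarith [h y hy, max_lt h_sub h_add]

theorem thinness_eq_two_of_lindenstrauss_extremePoint
    (X : Type*) [NormedAddCommGroup X] [NormedSpace ℝ X] [CompleteSpace X] [Nontrivial X]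
    (hL : IsLindenstrauss X)
    (hext : (Set.extremePoints ℝ (Metric.closedBall (0 : X) 1)).Nonempty) :
    thinness X = 2 := by
  obtain ⟨e, he⟩ := hext
  have he1 : ‖e‖ = 1 := by simpa using extremePoints_closedBall_subset_sphere he
  refine thinness_eq_two_of_forall_two_le_max he1 fun y hy => ?_
  simpa [he1, hy, one_add_one_eq_two] using hL.norm_add_norm_le_max_of_mem_extremePoints he y
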